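/- arXiv:0806.0721 — 14 statements merged into one kernel-verified Lean document; each statement's English description precedes it below -/
import Mathlib

section
/- Let f, g, h : ℕ → ℚ satisfy f(0)=3, g(0)=1, h(0)=1 and the recursions f(n+1)=6·f(n)²·g(n), g(n+1)=f(n)²·h(n)+7·f(n)·g(n)², h(n+1)=12·f(n)·g(n)·h(n)+14·g(n)³ for all n ≥ 0. Then for every n ≥ 0 one has 3·g(n)² = f(n)·h(n), and consequently g(n+1)=10·f(n)·g(n)² = (10/3)·f(n)²·h(n) and h(n+1)=50·g(n)³ = (50/3)·f(n)·g(n)·h(n). -/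
/-!
Under the recursion, `3 g(n+1)² - f(n+1) h(n+1)` factors as
`3 f(n)² (3 g(n)² - f(n) h(n)) (7 g(n)² - f(n) h(n))`, so the relation `3 g² = f h`, true at
`n = 0`, propagates to all `n`. Substituting `f h = 3 g²` into the recursions for `g` and `h`
gives the simplified forms.
-/

section GasketRecursion

variable {R : Type*} [CommRing R] (f g h : R)

theorem gasket_step_discriminant_factor :
    3 * (f ^ 2 * h + 7 * f * g ^ 2) ^ 2 - 6 * f ^ 2 * g * (12 * f * g * h + 14 * g ^ 3) =
      3 * f ^ 2 * (3 * g ^ 2 - f * h) * (7 * g ^ 2 - f * h) := by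
  ring

variable {f g h}

theorem gasket_step_three_sq_eq_mul (hfgh : 3 * g ^ 2 = f * h) :
    3 * (f ^ 2 * h + 7 * f * g ^ 2) ^ 2 = 6 * f ^ 2 * g * (12 * f * g * h + 14 * g ^ 3) := by
  rw [← sub_eq_zero, gasket_step_discriminant_factor, hfgh, sub_self, mul_zero, zero_mul]

theorem gasket_step_g_eq (hfgh : 3 * g ^ 2 = f * h) :
    f ^ 2 * h + 7 * f * g ^ 2 = 10 * f * g ^ 2 := by
  linear_combination (-f) * hfgh

theorem gasket_step_h_eq (hfgh : 3 * g ^ 2 = f * h) :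
    12 * f * g * h + 14 * g ^ 3 = 50 * g ^ 3 := by
  linear_combination (-12 * g) * hfgh

theorem three_sq_eq_mul_of_gasket_recursion {f g h : ℕ → R} (h0 : 3 * g 0 ^ 2 = f 0 * h 0)
    (hf : ∀ n, f (n + 1) = 6 * f n ^ 2 * g n)
    (hg : ∀ n, g (n + 1) = f n ^ 2 * h n + 7 * f n * g n ^ 2)
    (hh : ∀ n, h (n + 1) = 12 * f n * g n * h n + 14 * g n ^ 3) (n : ℕ) :
    3 * g n ^ 2 = f n * h n := by
  induction n with
  | zero => exact h0
  | succ n ih => rw [hf, hg, hh]; exact gasket_step_three_sq_eq_mul ih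

end GasketRecursion

section CharZero

variable {K : Type*} [Field K] [CharZero K] {f g h : K}

theorem gasket_step_g_eq_div (hfgh : 3 * g ^ 2 = f * h) :
    f ^ 2 * h + 7 * f * g ^ 2 = 10 / 3 * f ^ 2 * h := by
  linear_combination (7 * f / 3) * hfgh

theorem gasket_step_h_eq_div (hfgh : 3 * g ^ 2 = f * h) :
    12 * f * g * h + 14 * g ^ 3 = 50 / 3 * f * g * h := by
  linear_combination (14 * g / 3) * hfgh

end CharZero

/-- The spanning-tree / forest counts `f`, `g`, `h` of the Sierpinski gasket `SG(n)`
satisfy `3 g(n)² = f(n) h(n)`, hence the simplified recursions for `g` and `h`. -/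
theorem stmt_0 (f g h : ℕ → ℚ)
    (hf0 : f 0 = 3) (hg0 : g 0 = 1) (hh0 : h 0 = 1)
    (hf : ∀ n, f (n + 1) = 6 * (f n) ^ 2 * g n)
    (hg : ∀ n, g (n + 1) = (f n) ^ 2 * h n + 7 * f n * (g n) ^ 2)
    (hh : ∀ n, h (n + 1) = 12 * f n * g n * h n + 14 * (g n) ^ 3) :
    ∀ n : ℕ,
      3 * (g n) ^ 2 = f n * h n ∧
      g (n + 1) = 10 * f n * (g n) ^ 2 ∧
      g (n + 1) = (10 / 3) * (f n) ^ 2 * h n ∧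
      h (n + 1) = 50 * (g n) ^ 3 ∧
      h (n + 1) = (50 / 3) * f n * g n * h n := by
  have h0 : 3 * g 0 ^ 2 = f 0 * h 0 := by rw [hf0, hg0, hh0]; norm_num
  intro n
  have hn := three_sq_eq_mul_of_gasket_recursion h0 hf hg hh n
  rw [hg, hh]
  exact ⟨hn, gasket_step_g_eq hn, gasket_step_g_eq_div hn, gasket_step_h_eq hn,
    gasket_step_h_eq_div hn⟩
end

section
/- Let f, g, h : ℕ → ℚ satisfy f(0)=3, g(0)=1, h(0)=1 and the recursions f(n+1)=6·f(n)²·g(n), g(n+1)=f(n)²·h(n)+7·f(n)·g(n)², h(n+1)=12·f(n)·g(n)·h(n)+14·g(n)³ for all n ≥ 0. Then for every n ≥ 0, f(n) = 2^{α(n)}·3^{β(n)}·5^{γ(n)}, where α(n)=(3^n−1)/2, β(n)=(3^{n+1}+2n+1)/4 and γ(n)=(3^n−2n−1)/4 (these are natural numbers for every n). -/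
/-!
Write `f n = 3 x (3^n)^2`, `g n = x 3^n 5^n`, `h n = x (5^n)^2` for a scale factor `x`. This shape
is preserved by the recursion, with the new scale factor `2 x^3 (3^n)^3 5^n`; starting from `x = 1`,
the scale factor is therefore always `2^a 3^b 5^c` with `a ↦ 3a + 1`, `b ↦ 3b + 3n`, `c ↦ 3c + n`,
and these linear recursions solve to the stated closed forms.
-/

section

variable {R : Type*} [CommSemiring R] (x u v : R)

theorem sierpinski_step_f :
    6 * (3 * x * u ^ 2) ^ 2 * (x * u * v) = 3 * (2 * x ^ 3 * u ^ 3 * v) * (3 * u) ^ 2 := by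
  ring

theorem sierpinski_step_g :
    (3 * x * u ^ 2) ^ 2 * (x * v ^ 2) + 7 * (3 * x * u ^ 2) * (x * u * v) ^ 2 =
      (2 * x ^ 3 * u ^ 3 * v) * (3 * u) * (5 * v) := by
  ring

theorem sierpinski_step_h :
    12 * (3 * x * u ^ 2) * (x * u * v) * (x * v ^ 2) + 14 * (x * u * v) ^ 3 =
      (2 * x ^ 3 * u ^ 3 * v) * (5 * v) ^ 2 := by
  ring

end

theorem sierpinski_scale_pow_succ (a b c n : ℕ) :
    (2 : ℚ) ^ (3 * a + 1) * 3 ^ (3 * b + 3 * n) * 5 ^ (3 * c + n) =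
      2 * (2 ^ a * 3 ^ b * 5 ^ c) ^ 3 * (3 ^ n) ^ 3 * 5 ^ n := by
  simp only [pow_add, pow_mul']
  ring

theorem sierpinski_counts_eq_scaled (f g h : ℕ → ℚ)
    (hf0 : f 0 = 3) (hg0 : g 0 = 1) (hh0 : h 0 = 1)
    (hf : ∀ n, f (n + 1) = 6 * (f n) ^ 2 * g n)
    (hg : ∀ n, g (n + 1) = (f n) ^ 2 * h n + 7 * f n * (g n) ^ 2)
    (hh : ∀ n, h (n + 1) = 12 * f n * g n * h n + 14 * (g n) ^ 3) (n : ℕ) :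
    ∃ a b c : ℕ, 2 * a + 1 = 3 ^ n ∧ 4 * b + 6 * n + 3 = 3 ^ (n + 1) ∧ 4 * c + 2 * n + 1 = 3 ^ n ∧
      f n = 3 * (2 ^ a * 3 ^ b * 5 ^ c) * (3 ^ n) ^ 2 ∧
      g n = (2 ^ a * 3 ^ b * 5 ^ c) * 3 ^ n * 5 ^ n ∧
      h n = (2 ^ a * 3 ^ b * 5 ^ c) * (5 ^ n) ^ 2 := by
  induction n with
  | zero => exact ⟨0, 0, 0, rfl, rfl, rfl, by simp [hf0], by simp [hg0], by simp [hh0]⟩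
  | succ n ih =>
    obtain ⟨a, b, c, ha, hb, hc, hfn, hgn, hhn⟩ := ih
    refine ⟨3 * a + 1, 3 * b + 3 * n, 3 * c + n, by lia, by lia, by lia, ?_, ?_, ?_⟩ <;>
      simp only [sierpinski_scale_pow_succ, pow_succ' _ n]
    · rw [hf, hfn, hgn, sierpinski_step_f]
    · rw [hg, hfn, hgn, hhn, sierpinski_step_g]
    · rw [hh, hfn, hgn, hhn, sierpinski_step_h]

/-- The number of spanning trees of `SG(n)` is `2^α(n) 3^β(n) 5^γ(n)` with
`α(n) = (3^n - 1)/2`, `β(n) = (3^(n+1) + 2n + 1)/4`, `γ(n) = (3^n - 2n - 1)/4`,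
which are natural numbers for every `n`. -/
theorem stmt_1 (f g h : ℕ → ℚ)
    (hf0 : f 0 = 3) (hg0 : g 0 = 1) (hh0 : h 0 = 1)
    (hf : ∀ n, f (n + 1) = 6 * (f n) ^ 2 * g n)
    (hg : ∀ n, g (n + 1) = (f n) ^ 2 * h n + 7 * f n * (g n) ^ 2)
    (hh : ∀ n, h (n + 1) = 12 * f n * g n * h n + 14 * (g n) ^ 3) :
    ∀ n : ℕ, ∃ α β γ : ℕ,
      2 * α + 1 = 3 ^ n ∧
      4 * β = 3 ^ (n + 1) + 2 * n + 1 ∧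
      4 * γ + 2 * n + 1 = 3 ^ n ∧
      f n = 2 ^ α * 3 ^ β * 5 ^ γ := by
  intro n
  obtain ⟨a, b, c, ha, hb, hc, hfn, -, -⟩ :=
    sierpinski_counts_eq_scaled f g h hf0 hg0 hh0 hf hg hh n
  refine ⟨a, b + 2 * n + 1, c, ha, by lia, hc, ?_⟩
  rw [hfn]
  ring
end

section
/- Let f, g, h : ℕ → ℚ satisfy f(0)=3, g(0)=1, h(0)=1 and f(n+1)=6·f(n)²·g(n), g(n+1)=f(n)²·h(n)+7·f(n)·g(n)², h(n+1)=12·f(n)·g(n)·h(n)+14·g(n)³. Let f1, g1, f2, g2 : ℕ → ℚ satisfy f1(0)=2, g1(0)=1, f2(0)=1, g2(0)=0 and, for j=1,2, fj(n+1)=4·fj(n)·f(n)·g(n)+2·gj(n)·f(n)² and gj(n+1)=fj(n)·f(n)·h(n)+3·fj(n)·g(n)²+4·gj(n)·f(n)·g(n). Then for every n ≥ 0: f1(n) = (11/14 − (5/42)·(1/15)^n)·2^{α(n)}·3^{β(n)}·5^{γ(n)} and f2(n) = (3/14 + (5/42)·(1/15)^n)·2^{α(n)}·3^{β(n)}·5^{γ(n)},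 where α(n)=(3^n−1)/2, β(n)=(3^{n+1}+2n+1)/4, γ(n)=(3^n−2n−1)/4; moreover the real sequences f1(n)/f(n) and f2(n)/f(n) converge to 11/14 and 3/14 respectively as n → ∞. -/
/-!
The invariant `f n * h n = 3 * g n ^ 2` collapses the recursions to
`f (n+1) = 6 f² g` and `g (n+1) = 10 f g²`, so `g n / f n = 5ⁿ / 3ⁿ⁺¹` and
`f (n+1) = 2 · 5ⁿ · f³ / 3ⁿ`, which gives the prime factorisation of `f n`.
In terms of `p = fⱼ / f` and `q = gⱼ / g` the recursions for `fⱼ, gⱼ` become the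
averaging step `p' = (2p + q)/3`, `q' = (3p + 2q)/5`, under which `9p + 5q` is
conserved and `p - q` is multiplied by `1/15`.
-/

open Filter Topology

structure SGSpanningCounts (f g h : ℕ → ℚ) : Prop where
  f_zero : f 0 = 3
  g_zero : g 0 = 1
  h_zero : h 0 = 1
  f_succ : ∀ n, f (n + 1) = 6 * f n ^ 2 * g n
  g_succ : ∀ n, g (n + 1) = f n ^ 2 * h n + 7 * f n * g n ^ 2
  h_succ : ∀ n, h (n + 1) = 12 * f n * g n * h n + 14 * g n ^ 3

structure SGDegreeCounts (f g h fj gj : ℕ → ℚ) : Prop where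
  fj_succ : ∀ n, fj (n + 1) = 4 * fj n * f n * g n + 2 * gj n * f n ^ 2
  gj_succ : ∀ n, gj (n + 1) = fj n * f n * h n + 3 * fj n * g n ^ 2 + 4 * gj n * f n * g n

namespace SGSpanningCounts

variable {f g h : ℕ → ℚ}

theorem f_mul_h (H : SGSpanningCounts f g h) (n : ℕ) : f n * h n = 3 * g n ^ 2 := by
  induction n with
  | zero => simp [H.f_zero, H.g_zero, H.h_zero]
  | succ n ih =>
    have h_succ : h (n + 1) = 50 * g n ^ 3 := by
      linear_combination H.h_succ n + 12 * g n * ih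
    have g_succ : g (n + 1) = 10 * f n * g n ^ 2 := by
      linear_combination H.g_succ n + f n * ih
    rw [H.f_succ, h_succ, g_succ]
    ring

theorem g_succ_eq (H : SGSpanningCounts f g h) (n : ℕ) : g (n + 1) = 10 * f n * g n ^ 2 := by
  linear_combination H.g_succ n + f n * H.f_mul_h n

theorem pos (H : SGSpanningCounts f g h) (n : ℕ) : 0 < f n ∧ 0 < g n := by
  induction n with
  | zero => simp [H.f_zero, H.g_zero]
  | succ n ih =>
    obtain ⟨hf, hg⟩ := ih
    rw [H.f_succ, H.g_succ_eq]
    exact ⟨by positivity, by positivity⟩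

theorem pow_mul_g (H : SGSpanningCounts f g h) (n : ℕ) : 3 ^ (n + 1) * g n = 5 ^ n * f n := by
  induction n with
  | zero => simp [H.f_zero, H.g_zero]
  | succ n ih =>
    rw [H.g_succ_eq, H.f_succ]
    linear_combination (30 * f n * g n) * ih

theorem pow_mul_f_succ (H : SGSpanningCounts f g h) (n : ℕ) :
    3 ^ n * f (n + 1) = 2 * 5 ^ n * f n ^ 3 := by
  rw [H.f_succ]
  linear_combination (2 * f n ^ 2) * H.pow_mul_g n

theorem exists_f_eq_prime_pow (H : SGSpanningCounts f g h) (n : ℕ) :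
    ∃ α β γ : ℕ, 2 * α + 1 = 3 ^ n ∧ 4 * β = 3 ^ (n + 1) + 2 * n + 1 ∧
      4 * γ + 2 * n + 1 = 3 ^ n ∧ f n = 2 ^ α * 3 ^ β * 5 ^ γ := by
  induction n with
  | zero => exact ⟨0, 1, 0, by norm_num, by norm_num, by norm_num, by simp [H.f_zero]⟩
  | succ n ih =>
    obtain ⟨α, β, γ, hα, hβ, hγ, hf⟩ := ih
    have h3 : 3 ^ (n + 1) = 3 * 3 ^ n := pow_succ' 3 n
    have h3' : 3 ^ (n + 2) = 3 * 3 ^ (n + 1) := pow_succ' 3 (n + 1)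
    have hβn : n ≤ 3 * β := by omega
    refine ⟨3 * α + 1, 3 * β - n, 3 * γ + n, by omega, by omega, by omega, ?_⟩
    have h3pow : (3 : ℚ) ^ n * 3 ^ (3 * β - n) = 3 ^ (3 * β) := by
      rw [← pow_add, Nat.add_sub_cancel' hβn]
    have h3ne : (3 : ℚ) ^ n ≠ 0 := by positivity
    apply mul_left_cancel₀ h3ne
    calc (3 : ℚ) ^ n * f (n + 1) = 2 * 5 ^ n * (2 ^ α * 3 ^ β * 5 ^ γ) ^ 3 := by
          rw [H.pow_mul_f_succ, hf]
      _ = 2 ^ (3 * α + 1) * 3 ^ (3 * β) * 5 ^ (3 * γ + n) := by ring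
      _ = 3 ^ n * (2 ^ (3 * α + 1) * 3 ^ (3 * β - n) * 5 ^ (3 * γ + n)) := by
          rw [← h3pow]; ring

end SGSpanningCounts

theorem closed_form_of_averaging {p q : ℕ → ℚ}
    (hp : ∀ n, p (n + 1) = (2 * p n + q n) / 3) (hq : ∀ n, q (n + 1) = (3 * p n + 2 * q n) / 5)
    (n : ℕ) : p n = (9 * p 0 + 5 * q 0) / 14 + 5 * (p 0 - q 0) / 14 * (1 / 15) ^ n := by
  suffices p n = (9 * p 0 + 5 * q 0) / 14 + 5 * (p 0 - q 0) / 14 * (1 / 15) ^ n ∧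
      q n = (9 * p 0 + 5 * q 0) / 14 - 9 * (p 0 - q 0) / 14 * (1 / 15) ^ n from this.1
  induction n with
  | zero => constructor <;> ring
  | succ n ih =>
    rw [hp, hq, ih.1, ih.2, pow_succ]
    constructor <;> ring

theorem tendsto_const_add_mul_pow {r : ℝ} (hr : |r| < 1) (a b : ℝ) :
    Tendsto (fun n : ℕ => a + b * r ^ n) atTop (𝓝 a) := by
  simpa using ((tendsto_pow_atTop_nhds_zero_of_abs_lt_one hr).const_mul b).const_add a

namespace SGDegreeCounts

variable {f g h fj gj : ℕ → ℚ}

theorem div_succ (H : SGSpanningCounts f g h) (D : SGDegreeCounts f g h fj gj) (n : ℕ) :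
    fj (n + 1) / f (n + 1) = (2 * (fj n / f n) + gj n / g n) / 3 ∧
      gj (n + 1) / g (n + 1) = (3 * (fj n / f n) + 2 * (gj n / g n)) / 5 := by
  obtain ⟨hf, hg⟩ := H.pos n
  have hfh := H.f_mul_h n
  rw [D.fj_succ, D.gj_succ, H.f_succ, H.g_succ_eq]
  constructor
  · field_simp
    ring
  · field_simp
    linear_combination 5 * fj n * hfh

theorem div_eq (H : SGSpanningCounts f g h) (D : SGDegreeCounts f g h fj gj) (n : ℕ) :
    fj n / f n = (9 * (fj 0 / f 0) + 5 * (gj 0 / g 0)) / 14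
      + 5 * (fj 0 / f 0 - gj 0 / g 0) / 14 * (1 / 15) ^ n :=
  closed_form_of_averaging (p := fun n => fj n / f n) (q := fun n => gj n / g n)
    (fun n => (D.div_succ H n).1) (fun n => (D.div_succ H n).2) n

end SGDegreeCounts

/-- Closed form of the spanning-tree counts `f_1(n,o)`, `f_2(n,o)` with prescribed
degree at the corner vertex `o` of `SG(n)`, and the limiting probabilities
`F_1(n,o) → 11/14`, `F_2(n,o) → 3/14`. -/
theorem stmt_4 (f g h f1 g1 f2 g2 : ℕ → ℚ)
    (hf0 : f 0 = 3) (hg0 : g 0 = 1) (hh0 : h 0 = 1)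
    (hf : ∀ n, f (n + 1) = 6 * (f n) ^ 2 * g n)
    (hg : ∀ n, g (n + 1) = (f n) ^ 2 * h n + 7 * f n * (g n) ^ 2)
    (hh : ∀ n, h (n + 1) = 12 * f n * g n * h n + 14 * (g n) ^ 3)
    (hf10 : f1 0 = 2) (hg10 : g1 0 = 1) (hf20 : f2 0 = 1) (hg20 : g2 0 = 0)
    (hf1 : ∀ n, f1 (n + 1) = 4 * f1 n * f n * g n + 2 * g1 n * (f n) ^ 2)
    (hg1 : ∀ n, g1 (n + 1) = f1 n * f n * h n + 3 * f1 n * (g n) ^ 2 + 4 * g1 n * f n * g n)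
    (hf2 : ∀ n, f2 (n + 1) = 4 * f2 n * f n * g n + 2 * g2 n * (f n) ^ 2)
    (hg2 : ∀ n, g2 (n + 1) = f2 n * f n * h n + 3 * f2 n * (g n) ^ 2 + 4 * g2 n * f n * g n) :
    (∀ n : ℕ, ∃ α β γ : ℕ,
      2 * α + 1 = 3 ^ n ∧
      4 * β = 3 ^ (n + 1) + 2 * n + 1 ∧
      4 * γ + 2 * n + 1 = 3 ^ n ∧
      f1 n = (11 / 14 - (5 / 42) * (1 / 15) ^ n) * (2 ^ α * 3 ^ β * 5 ^ γ) ∧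
      f2 n = (3 / 14 + (5 / 42) * (1 / 15) ^ n) * (2 ^ α * 3 ^ β * 5 ^ γ)) ∧
    Filter.Tendsto (fun n : ℕ => ((f1 n / f n : ℚ) : ℝ)) Filter.atTop (nhds (11 / 14)) ∧
    Filter.Tendsto (fun n : ℕ => ((f2 n / f n : ℚ) : ℝ)) Filter.atTop (nhds (3 / 14)) := by
  have H : SGSpanningCounts f g h := ⟨hf0, hg0, hh0, hf, hg, hh⟩
  have ratio1 (n : ℕ) : f1 n / f n = 11 / 14 - 5 / 42 * (1 / 15) ^ n := by
    rw [SGDegreeCounts.div_eq H ⟨hf1, hg1⟩ n, hf10, hg10, hf0, hg0]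
    ring
  have ratio2 (n : ℕ) : f2 n / f n = 3 / 14 + 5 / 42 * (1 / 15) ^ n := by
    rw [SGDegreeCounts.div_eq H ⟨hf2, hg2⟩ n, hf20, hg20, hf0, hg0]
    ring
  have hr : |(1 / 15 : ℝ)| < 1 := by norm_num [abs_of_pos]
  refine ⟨fun n => ?_, ?_, ?_⟩
  · obtain ⟨α, β, γ, hα, hβ, hγ, hfn⟩ := H.exists_f_eq_prime_pow n
    have hf_ne : f n ≠ 0 := (H.pos n).1.ne'
    refine ⟨α, β, γ, hα, hβ, hγ, ?_, ?_⟩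
    · rw [← ratio1, ← hfn, div_mul_cancel₀ _ hf_ne]
    · rw [← ratio2, ← hfn, div_mul_cancel₀ _ hf_ne]
  · refine (tendsto_const_add_mul_pow hr (11 / 14) (-5 / 42)).congr fun n => ?_
    rw [ratio1]
    push_cast
    ring
  · refine (tendsto_const_add_mul_pow hr (3 / 14) (5 / 42)).congr fun n => ?_
    rw [ratio2]
    push_cast
    ring
end

section
/- Define F1(n)=11/14−(5/42)·(1/15)^n and G1(n)=11/14+(3/14)·(1/15)^n. Let Gb, H : ℕ → ℚ satisfy Gb(0)=0, H(0)=0 and, for all n ≥ 0, Gb(n+1)=(2/5)·Gb(n)+(3/10)·H(n)+(1/10)·F1(n)+(1/5)·G1(n) and H(n+1)=(6/25)·Gb(n)+(6/25)·H(n)+(6/25)·F1(n)+(7/25)·G1(n). Then for every n ≥ 0: Gb(n) = 11/14 − (2/7)·(1/15)^n − (6/7)·(3/5)^n + (5/14)·(1/25)^n and H(n) = 11/14 + (3/14)·(1/15)^n − (4/7)·(3/5)^n − (3/7)·(1/25)^n. -/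
/-- Closed form of the degree-1 probabilities `G_1(n,b_n)` and `H_1(n,o)` on the
Sierpinski gasket `SG(n)`. -/
theorem stmt_8 (Gb H : ℕ → ℚ)
    (hGb0 : Gb 0 = 0) (hH0 : H 0 = 0)
    (hGb : ∀ n, Gb (n + 1) = (2 / 5) * Gb n + (3 / 10) * H n
      + (1 / 10) * (11 / 14 - (5 / 42) * (1 / 15) ^ n)
      + (1 / 5) * (11 / 14 + (3 / 14) * (1 / 15) ^ n))
    (hH : ∀ n, H (n + 1) = (6 / 25) * Gb n + (6 / 25) * H n
      + (6 / 25) * (11 / 14 - (5 / 42) * (1 / 15) ^ n)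
      + (7 / 25) * (11 / 14 + (3 / 14) * (1 / 15) ^ n)) :
    ∀ n : ℕ,
      Gb n = 11 / 14 - (2 / 7) * (1 / 15) ^ n - (6 / 7) * (3 / 5) ^ n
        + (5 / 14) * (1 / 25) ^ n ∧
      H n = 11 / 14 + (3 / 14) * (1 / 15) ^ n - (4 / 7) * (3 / 5) ^ n
        - (3 / 7) * (1 / 25) ^ n := by
  intro n
  induction n with
  | zero => norm_num [hGb0, hH0]
  | succ n ih =>
    obtain ⟨ihGb, ihH⟩ := ih
    constructor
    · rw [hGb, ihGb, ihH]; ring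
    · rw [hH, ihGb, ihH]; ring
end

section
/- Define F2(n)=3/14+(5/42)·(1/15)^n and G2(n)=3/14−(3/14)·(1/15)^n. Let Gb, H : ℕ → ℚ satisfy Gb(0)=0, H(0)=0 and, for all n ≥ 0, Gb(n+1)=(2/5)·Gb(n)+(3/10)·H(n)+(1/10)·F2(n)+(1/5)·G2(n) and H(n+1)=(6/25)·Gb(n)+(6/25)·H(n)+(6/25)·F2(n)+(7/25)·G2(n). Then for every n ≥ 0: Gb(n) = 3/14 + (2/7)·(1/15)^n − (9/28)·(3/5)^n − (5/28)·(1/25)^n and H(n) = 3/14 − (3/14)·(1/15)^n − (3/14)·(3/5)^n + (3/14)·(1/25)^n. -/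
/-- Closed form of the degree-2 probabilities `G_2(n,b_n)` and `H_2(n,o)` on the
Sierpinski gasket `SG(n)`. -/
theorem stmt_9 (Gb H : ℕ → ℚ)
    (hGb0 : Gb 0 = 0) (hH0 : H 0 = 0)
    (hGb : ∀ n, Gb (n + 1) = (2 / 5) * Gb n + (3 / 10) * H n
      + (1 / 10) * (3 / 14 + (5 / 42) * (1 / 15) ^ n)
      + (1 / 5) * (3 / 14 - (3 / 14) * (1 / 15) ^ n))
    (hH : ∀ n, H (n + 1) = (6 / 25) * Gb n + (6 / 25) * H n
      + (6 / 25) * (3 / 14 + (5 / 42) * (1 / 15) ^ n)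
      + (7 / 25) * (3 / 14 - (3 / 14) * (1 / 15) ^ n)) :
    ∀ n : ℕ,
      Gb n = 3 / 14 + (2 / 7) * (1 / 15) ^ n - (9 / 28) * (3 / 5) ^ n
        - (5 / 28) * (1 / 25) ^ n ∧
      H n = 3 / 14 - (3 / 14) * (1 / 15) ^ n - (3 / 14) * (3 / 5) ^ n
        + (3 / 14) * (1 / 25) ^ n := by
  intro n
  induction n with
  | zero => norm_num [hGb0, hH0]
  | succ n ih =>
    obtain ⟨hGbn, hHn⟩ := ih
    exact ⟨by rw [hGb n, hGbn, hHn]; ring, by rw [hH n, hGbn, hHn]; ring⟩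
end

section
/- Let F, Ga, Gb : ℕ → ℚ satisfy, for all m ≥ 0, the recursions F(m+1)=(2/3)·F(m)+(1/6)·(Ga(m)+Gb(m)), Ga(m+1)=(3/5)·F(m)+(3/10)·Ga(m)+(1/10)·Gb(m), Gb(m+1)=(3/5)·F(m)+(1/10)·Ga(m)+(3/10)·Gb(m). Then for every m ≥ 0, F(m) = (9/14 + (5/14)·(1/15)^m)·F(0) + (5/28)·(1 − (1/15)^m)·(Ga(0)+Gb(0)). -/
/-! The sum `S = Ga + Gb` satisfies, together with `F`, the closed two-dimensional recursion
`F' = 2/3 F + 1/6 S`, `S' = 6/5 F + 2/5 S`, whose matrix has eigenvalues `1` and `1/15` with left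
eigenvectors `(18, 5)` and `(2, -1)`. Hence `18 F + 5 S` is conserved and `2 F - S` decays like
`(1/15)^m`, and `F = ((18 F + 5 S) + 5 (2 F - S)) / 28`. -/

lemma eq_pow_mul_of_succ {M : Type*} [Monoid M] {u : ℕ → M} {r : M}
    (h : ∀ m, u (m + 1) = r * u m) (m : ℕ) : u m = r ^ m * u 0 := by
  induction m with
  | zero => rw [pow_zero, one_mul]
  | succ m ih => rw [h, ih, pow_succ', mul_assoc]

lemma closed_form_of_recursion (F S : ℕ → ℚ)
    (hF : ∀ m, F (m + 1) = (2 / 3) * F m + (1 / 6) * S m)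
    (hS : ∀ m, S (m + 1) = (6 / 5) * F m + (2 / 5) * S m) (m : ℕ) :
    F m = (9 / 14 + (5 / 14) * (1 / 15) ^ m) * F 0 + (5 / 28) * (1 - (1 / 15) ^ m) * S 0 := by
  have conserved := eq_pow_mul_of_succ (u := fun m => 18 * F m + 5 * S m) (r := 1)
    (fun m => by simp only [hF, hS]; ring) m
  have decaying := eq_pow_mul_of_succ (u := fun m => 2 * F m - S m) (r := 1 / 15)
    (fun m => by simp only [hF, hS]; ring) m
  simp only [one_pow, one_mul] at conserved decaying
  linear_combination (conserved + 5 * decaying) / 28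

/-- Solution of the three-dimensional linear recursion governing the interior-vertex
degree probabilities `F_j(n+m+1,a_n)`, `G_j(n+m+1,a_n)`, `G_j(n+m+1,b_n)` on the
Sierpinski gasket, for arbitrary initial data. -/
theorem stmt_10 (F Ga Gb : ℕ → ℚ)
    (hF : ∀ m, F (m + 1) = (2 / 3) * F m + (1 / 6) * (Ga m + Gb m))
    (hGa : ∀ m, Ga (m + 1) = (3 / 5) * F m + (3 / 10) * Ga m + (1 / 10) * Gb m)
    (hGb : ∀ m, Gb (m + 1) = (3 / 5) * F m + (1 / 10) * Ga m + (3 / 10) * Gb m) :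
    ∀ m : ℕ,
      F m = (9 / 14 + (5 / 14) * (1 / 15) ^ m) * F 0
        + (5 / 28) * (1 - (1 / 15) ^ m) * (Ga 0 + Gb 0) :=
  closed_form_of_recursion F (fun m => Ga m + Gb m) hF
    (fun m => by simp only [hGa, hGb]; ring)
end

section
/- Define the rational sequences F1(n)=11/14−(5/42)·(1/15)^n, F2(n)=3/14+(5/42)·(1/15)^n, G1(n)=11/14+(3/14)·(1/15)^n, G1b(n)=11/14−(2/7)·(1/15)^n−(6/7)·(3/5)^n+(5/14)·(1/25)^n, G0b(n)=(33/28)·(3/5)^n−(5/28)·(1/25)^n, H0(n)=(11/14)·(3/5)^n+(3/14)·(1/25)^n. Fix n ≥ 0 and let F, Ga, Gb : ℕ → ℚ satisfy F(0)=F1(n)·G0b(n)/3, Ga(0)=F1(n)·G0b(n)/5, Gb(0)=(3/10)·F1(n)·H0(n)+(1/5)·(F1(n)+G1(n))·G0b(n), together with the recursions F(m+1)=(2/3)F(m)+(1/6)(Ga(m)+Gb(m)), Ga(m+1)=(3/5)F(m)+(3/10)Ga(m)+(1/10)Gb(m), Gb(m+1)=(3/5)F(m)+(1/10)Ga(m)+(3/10)Gb(m).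 Then for all m ≥ 0: F(m) = (1815/5488)·(3/5)^n − (99/1372)·(1/25)^n + (55/16464)·(1/375)^n + (1/15)^m·( −(121/5488)·(3/5)^n − (22/1029)·(1/25)^n + (185/49392)·(1/375)^n ). -/
/-!
Only `F` and the sum `S = Ga + Gb` matter: they satisfy the planar recursion
`F' = 2/3 F + 1/6 S`, `S' = 6/5 F + 2/5 S`, whose matrix has eigenvalues `1` and `1/15`.
The left eigenvectors give the invariant `18 F + 5 S` and the geometrically decaying
combination `S - 2 F`, and `28 F` is the difference of the first and five times the second.
It remains to evaluate both at `m = 0`, using `(1/15)^n (3/5)^n = (1/25)^n` and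
`(1/15)^n (1/25)^n = (1/375)^n`.
-/

/-- `F_1(n,o)`: degree-1 probability at the corner vertex of `SG(n)`. -/
def F1 (n : ℕ) : ℚ := 11 / 14 - (5 / 42) * (1 / 15) ^ n

/-- `F_2(n,o)`: degree-2 probability at the corner vertex of `SG(n)`. -/
def F2 (n : ℕ) : ℚ := 3 / 14 + (5 / 42) * (1 / 15) ^ n

/-- `G_1(n,o)`. -/
def G1 (n : ℕ) : ℚ := 11 / 14 + (3 / 14) * (1 / 15) ^ n

/-- `G_2(n,o)`. -/
def G2 (n : ℕ) : ℚ := 3 / 14 - (3 / 14) * (1 / 15) ^ n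

/-- `G_0(n,b_n)`. -/
def G0b (n : ℕ) : ℚ := (33 / 28) * (3 / 5) ^ n - (5 / 28) * (1 / 25) ^ n

/-- `H_0(n,o)`. -/
def H0 (n : ℕ) : ℚ := (11 / 14) * (3 / 5) ^ n + (3 / 14) * (1 / 25) ^ n

/-- `G_1(n,b_n)`. -/
def G1b (n : ℕ) : ℚ :=
  11 / 14 - (2 / 7) * (1 / 15) ^ n - (6 / 7) * (3 / 5) ^ n + (5 / 14) * (1 / 25) ^ n

/-- `G_2(n,b_n)`. -/
def G2b (n : ℕ) : ℚ :=
  3 / 14 + (2 / 7) * (1 / 15) ^ n - (9 / 28) * (3 / 5) ^ n - (5 / 28) * (1 / 25) ^ n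

/-- `H_1(n,o)`. -/
def H1 (n : ℕ) : ℚ :=
  11 / 14 + (3 / 14) * (1 / 15) ^ n - (4 / 7) * (3 / 5) ^ n - (3 / 7) * (1 / 25) ^ n

/-- `H_2(n,o)`. -/
def H2 (n : ℕ) : ℚ :=
  3 / 14 - (3 / 14) * (1 / 15) ^ n - (3 / 14) * (3 / 5) ^ n + (3 / 14) * (1 / 25) ^ n

section PlanarRecursion

variable {K : Type*} [Field K] [CharZero K] {F S : ℕ → K}

lemma invariant_of_recursion
    (hF : ∀ m, F (m + 1) = 2 / 3 * F m + 1 / 6 * S m)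
    (hS : ∀ m, S (m + 1) = 6 / 5 * F m + 2 / 5 * S m) (m : ℕ) :
    18 * F m + 5 * S m = 18 * F 0 + 5 * S 0 := by
  induction m with
  | zero => rfl
  | succ k ih => rw [hF, hS, ← ih]; ring

lemma decay_of_recursion
    (hF : ∀ m, F (m + 1) = 2 / 3 * F m + 1 / 6 * S m)
    (hS : ∀ m, S (m + 1) = 6 / 5 * F m + 2 / 5 * S m) (m : ℕ) :
    S m - 2 * F m = (1 / 15) ^ m * (S 0 - 2 * F 0) := by
  induction m with
  | zero => simp
  | succ k ih => rw [hF, hS, pow_succ]; linear_combination ih / 15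

lemma closedForm_of_recursion
    (hF : ∀ m, F (m + 1) = 2 / 3 * F m + 1 / 6 * S m)
    (hS : ∀ m, S (m + 1) = 6 / 5 * F m + 2 / 5 * S m) (m : ℕ) :
    F m = (18 * F 0 + 5 * S 0) / 28 + (1 / 15) ^ m * (5 * (2 * F 0 - S 0) / 28) := by
  have hI := invariant_of_recursion hF hS m
  have hD := decay_of_recursion hF hS m
  linear_combination hI / 28 - 5 / 28 * hD

end PlanarRecursion

/-- Closed form of `F_1(n+m+1,a_n)`: degree-1 probability at the interior vertex
`a_n` of the Sierpinski gasket `SG(n+m+1)`. -/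
theorem stmt_11 (n : ℕ) (F Ga Gb : ℕ → ℚ)
    (hF0 : F 0 = F1 n * G0b n / 3)
    (hGa0 : Ga 0 = F1 n * G0b n / 5)
    (hGb0 : Gb 0 = (3 / 10) * F1 n * H0 n + (1 / 5) * (F1 n + G1 n) * G0b n)
    (hF : ∀ m, F (m + 1) = (2 / 3) * F m + (1 / 6) * (Ga m + Gb m))
    (hGa : ∀ m, Ga (m + 1) = (3 / 5) * F m + (3 / 10) * Ga m + (1 / 10) * Gb m)
    (hGb : ∀ m, Gb (m + 1) = (3 / 5) * F m + (1 / 10) * Ga m + (3 / 10) * Gb m) :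
    ∀ m : ℕ,
      F m = (1815 / 5488) * (3 / 5) ^ n - (99 / 1372) * (1 / 25) ^ n
        + (55 / 16464) * (1 / 375) ^ n
        + (1 / 15) ^ m * (-(121 / 5488) * (3 / 5) ^ n - (22 / 1029) * (1 / 25) ^ n
            + (185 / 49392) * (1 / 375) ^ n) := by
  intro m
  have hS : ∀ m, (Ga + Gb) (m + 1) = 6 / 5 * F m + 2 / 5 * (Ga + Gb) m := by
    intro m; simp only [Pi.add_apply, hGa, hGb]; ring
  have h25 : (1 / 25 : ℚ) ^ n = (1 / 15) ^ n * (3 / 5) ^ n := by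
    rw [← mul_pow]; norm_num
  have h375 : (1 / 375 : ℚ) ^ n = (1 / 15) ^ n * (1 / 25) ^ n := by
    rw [← mul_pow]; norm_num
  rw [closedForm_of_recursion hF hS m, hF0, hGa0, hGb0]
  simp only [F1, G1, G0b, H0, h375, h25]
  ring
end

section
/- Define F1(n)=11/14−(5/42)·(1/15)^n, F2(n)=3/14+(5/42)·(1/15)^n, G1(n)=11/14+(3/14)·(1/15)^n, G2(n)=3/14−(3/14)·(1/15)^n, G0b(n)=(33/28)·(3/5)^n−(5/28)·(1/25)^n, H0(n)=(11/14)·(3/5)^n+(3/14)·(1/25)^n, G1b(n)=11/14−(2/7)·(1/15)^n−(6/7)·(3/5)^n+(5/14)·(1/25)^n, H1(n)=11/14+(3/14)·(1/15)^n−(4/7)·(3/5)^n−(3/7)·(1/25)^n. Fix n ≥ 0 and let F, Ga, Gb : ℕ → ℚ satisfy F(0)=(1/3)·(F2(n)·G0b(n)+F1(n)²+F1(n)·(G1(n)+G1b(n))), Ga(0)=(3/10)·F1(n)²+(1/5)·F1(n)·(2·G1(n)+G1b(n))+(1/5)·F2(n)·G0b(n)+(1/10)·G1(n)², Gb(0)=(3/10)·(F2(n)·H0(n)+F1(n)·H1(n))+(1/10)·G1(n)²+(1/5)·F1(n)·(G1(n)+G1b(n))+(1/5)·F2(n)·G0b(n)+(1/5)·(G0b(n)·G2(n)+G1(n)·G1b(n)),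 together with the recursions F(m+1)=(2/3)F(m)+(1/6)(Ga(m)+Gb(m)), Ga(m+1)=(3/5)F(m)+(3/10)Ga(m)+(1/10)Gb(m), Gb(m+1)=(3/5)F(m)+(1/10)Ga(m)+(3/10)Gb(m). Then for all m ≥ 0: F(m) = 121/196 − (825/5488)·(3/5)^n + (171/1372)·(1/25)^n − (55/5488)·(1/375)^n − (121/1176)·(1/15)^n + (1/294)·(1/225)^n + (1/15)^m·( (55/5488)·(3/5)^n + (38/1029)·(1/25)^n − (185/16464)·(1/375)^n − (143/3528)·(1/15)^n + (11/2646)·(1/225)^n ). -/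
/-!
Writing `S m = Ga m + Gb m`, the recursion closes on the pair `(F m, S m)`, whose transition
matrix `[[2/3, 1/6], [6/5, 2/5]]` has eigenvalues `1` and `1/15`. Hence `F m = A + (1/15)^m B`,
with `A` and `B` read off from `F 0` and `S 0`; substituting the initial values is a polynomial
identity in `(1/15)^n` and `(3/5)^n`, since `1/25`, `1/225` and `1/375` are products of
`1/15` and `3/5`.
-/

section TwoTermRecurrence

variable {K : Type*} [Field K] [CharZero K] {u v : ℕ → K}

-- `(1, 2)` and `(1, -18/5)` are eigenvectors for the eigenvalues `1` and `1/15`.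
theorem recurrence_closed_form_pair
    (hu : ∀ m, u (m + 1) = 2 / 3 * u m + 1 / 6 * v m)
    (hv : ∀ m, v (m + 1) = 6 / 5 * u m + 2 / 5 * v m) (m : ℕ) :
    u m = (18 * u 0 + 5 * v 0) / 28 + (1 / 15) ^ m * ((10 * u 0 - 5 * v 0) / 28) ∧
      v m = 2 * ((18 * u 0 + 5 * v 0) / 28)
        - 18 / 5 * ((1 / 15) ^ m * ((10 * u 0 - 5 * v 0) / 28)) := by
  induction m with
  | zero => constructor <;> ring
  | succ m ih =>
    obtain ⟨hum, hvm⟩ := ih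
    constructor
    · rw [hu, hum, hvm]; ring
    · rw [hv, hum, hvm]; ring

theorem recurrence_closed_form
    (hu : ∀ m, u (m + 1) = 2 / 3 * u m + 1 / 6 * v m)
    (hv : ∀ m, v (m + 1) = 6 / 5 * u m + 2 / 5 * v m) (m : ℕ) :
    u m = (18 * u 0 + 5 * v 0) / 28 + (1 / 15) ^ m * ((10 * u 0 - 5 * v 0) / 28) :=
  (recurrence_closed_form_pair hu hv m).1

end TwoTermRecurrence

theorem add_succ_of_recurrence {K : Type*} [Field K] [CharZero K] {F Ga Gb : ℕ → K}
    (hGa : ∀ m, Ga (m + 1) = 3 / 5 * F m + 3 / 10 * Ga m + 1 / 10 * Gb m)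
    (hGb : ∀ m, Gb (m + 1) = 3 / 5 * F m + 1 / 10 * Ga m + 3 / 10 * Gb m) (m : ℕ) :
    Ga (m + 1) + Gb (m + 1) = 6 / 5 * F m + 2 / 5 * (Ga m + Gb m) := by
  rw [hGa, hGb]; ring

theorem one_div_25_pow (n : ℕ) : (1 / 25 : ℚ) ^ n = (1 / 15) ^ n * (3 / 5) ^ n := by
  rw [← mul_pow]; norm_num

theorem one_div_225_pow (n : ℕ) : (1 / 225 : ℚ) ^ n = (1 / 15) ^ n * (1 / 15) ^ n := by
  rw [← mul_pow]; norm_num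

theorem one_div_375_pow (n : ℕ) :
    (1 / 375 : ℚ) ^ n = (1 / 15) ^ n * (1 / 15) ^ n * (3 / 5) ^ n := by
  rw [← mul_pow, ← mul_pow]; norm_num

/-- Closed form of `F_2(n+m+1,a_n)`: degree-2 probability at the interior vertex
`a_n` of the Sierpinski gasket `SG(n+m+1)`. -/
theorem stmt_12 (n : ℕ) (F Ga Gb : ℕ → ℚ)
    (hF0 : F 0 = (1 / 3) * (F2 n * G0b n + (F1 n) ^ 2 + F1 n * (G1 n + G1b n)))
    (hGa0 : Ga 0 = (3 / 10) * (F1 n) ^ 2 + (1 / 5) * F1 n * (2 * G1 n + G1b n)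
      + (1 / 5) * F2 n * G0b n + (1 / 10) * (G1 n) ^ 2)
    (hGb0 : Gb 0 = (3 / 10) * (F2 n * H0 n + F1 n * H1 n) + (1 / 10) * (G1 n) ^ 2
      + (1 / 5) * F1 n * (G1 n + G1b n) + (1 / 5) * F2 n * G0b n
      + (1 / 5) * (G0b n * G2 n + G1 n * G1b n))
    (hF : ∀ m, F (m + 1) = (2 / 3) * F m + (1 / 6) * (Ga m + Gb m))
    (hGa : ∀ m, Ga (m + 1) = (3 / 5) * F m + (3 / 10) * Ga m + (1 / 10) * Gb m)
    (hGb : ∀ m, Gb (m + 1) = (3 / 5) * F m + (1 / 10) * Ga m + (3 / 10) * Gb m) :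
    ∀ m : ℕ,
      F m = 121 / 196 - (825 / 5488) * (3 / 5) ^ n + (171 / 1372) * (1 / 25) ^ n
        - (55 / 5488) * (1 / 375) ^ n - (121 / 1176) * (1 / 15) ^ n
        + (1 / 294) * (1 / 225) ^ n
        + (1 / 15) ^ m * ((55 / 5488) * (3 / 5) ^ n + (38 / 1029) * (1 / 25) ^ n
            - (185 / 16464) * (1 / 375) ^ n - (143 / 3528) * (1 / 15) ^ n
            + (11 / 2646) * (1 / 225) ^ n) := by
  intro m
  rw [recurrence_closed_form (v := fun m ↦ Ga m + Gb m) hF (add_succ_of_recurrence hGa hGb) m,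
    hF0, hGa0, hGb0]
  simp only [F1, F2, G1, G2, G1b, G0b, H0, H1, one_div_25_pow, one_div_225_pow, one_div_375_pow]
  ring
end

section
/- Define F1(n)=11/14−(5/42)·(1/15)^n, F2(n)=3/14+(5/42)·(1/15)^n, G1(n)=11/14+(3/14)·(1/15)^n, G2(n)=3/14−(3/14)·(1/15)^n, G1b(n)=11/14−(2/7)·(1/15)^n−(6/7)·(3/5)^n+(5/14)·(1/25)^n, G2b(n)=3/14+(2/7)·(1/15)^n−(9/28)·(3/5)^n−(5/28)·(1/25)^n, H1(n)=11/14+(3/14)·(1/15)^n−(4/7)·(3/5)^n−(3/7)·(1/25)^n, H2(n)=3/14−(3/14)·(1/15)^n−(3/14)·(3/5)^n+(3/14)·(1/25)^n. Fix n ≥ 0 and let F, Ga, Gb : ℕ → ℚ satisfy F(0)=(1/3)·(F2(n)·(G1(n)+G1b(n))+2·F1(n)·F2(n)+F1(n)·(G2(n)+G2b(n))), Ga(0)=(3/5)·F1(n)·F2(n)+(1/5)·F2(n)·(2·G1(n)+G1b(n))+(1/5)·G1(n)·G2(n)+(1/5)·F1(n)·(2·G2(n)+G2b(n)), Gb(0)=(3/10)·(F2(n)·H1(n)+F1(n)·H2(n))+(1/5)·((G1b(n)+G1(n))·G2(n)+G1(n)·G2b(n))+(1/5)·(F1(n)·(G2(n)+G2b(n))+F2(n)·(G1(n)+G1b(n))),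 together with the recursions F(m+1)=(2/3)F(m)+(1/6)(Ga(m)+Gb(m)), Ga(m+1)=(3/5)F(m)+(3/10)Ga(m)+(1/10)Gb(m), Gb(m+1)=(3/5)F(m)+(1/10)Ga(m)+(3/10)Gb(m). Then for all m ≥ 0: F(m) = 33/98 − (855/5488)·(3/5)^n − (45/1372)·(1/25)^n + (55/5488)·(1/375)^n + (11/147)·(1/15)^n − (1/147)·(1/225)^n + (1/15)^m·( (57/5488)·(3/5)^n − (10/1029)·(1/25)^n + (185/16464)·(1/375)^n + (13/441)·(1/15)^n − (11/1323)·(1/225)^n ). -/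
/-! The mean `S = (Ga + Gb) / 2` is the only part of `(Ga, Gb)` the recursion for `F` sees, and
`(F, S)` evolves by the averaging matrix `[[2/3, 1/3], [3/5, 2/5]]`, whose eigenvalues are `1` and
`1/15`: the weighted sum `9 F + 5 S` is conserved while `F - S` is multiplied by `1/15` at each step.
Evaluating both at `m = 0` with the corner-vertex formulas (after writing `1/25`, `1/225`, `1/375`
as products of `1/15` and `3/5`) gives the two constants of the closed form. -/

namespace TwoStateRecurrence

variable {K : Type*} [Field K] {p q : K} {F S : ℕ → K}

theorem weighted_sum_eq (hF : ∀ m, F (m + 1) = (1 - p) * F m + p * S m)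
    (hS : ∀ m, S (m + 1) = q * F m + (1 - q) * S m) (m : ℕ) :
    q * F m + p * S m = q * F 0 + p * S 0 := by
  induction m with
  | zero => rfl
  | succ m ih => rw [hF, hS, ← ih]; ring

theorem sub_eq_pow_mul (hF : ∀ m, F (m + 1) = (1 - p) * F m + p * S m)
    (hS : ∀ m, S (m + 1) = q * F m + (1 - q) * S m) (m : ℕ) :
    F m - S m = (1 - p - q) ^ m * (F 0 - S 0) := by
  induction m with
  | zero => ring
  | succ m ih => rw [hF, hS, pow_succ, mul_comm _ (1 - p - q), mul_assoc, ← ih]; ring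

theorem eq_closed_form (hF : ∀ m, F (m + 1) = (1 - p) * F m + p * S m)
    (hS : ∀ m, S (m + 1) = q * F m + (1 - q) * S m) (hpq : p + q ≠ 0) (m : ℕ) :
    F m = (q * F 0 + p * S 0) / (p + q) + (1 - p - q) ^ m * (p * (F 0 - S 0) / (p + q)) := by
  field_simp
  linear_combination weighted_sum_eq hF hS m + p * sub_eq_pow_mul hF hS m

end TwoStateRecurrence

/-- Closed form of `F_3(n+m+1,a_n)`: degree-3 probability at the interior vertex
`a_n` of the Sierpinski gasket `SG(n+m+1)`. -/
theorem stmt_13 (n : ℕ) (F Ga Gb : ℕ → ℚ)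
    (hF0 : F 0 = (1 / 3) * (F2 n * (G1 n + G1b n) + 2 * F1 n * F2 n
      + F1 n * (G2 n + G2b n)))
    (hGa0 : Ga 0 = (3 / 5) * F1 n * F2 n + (1 / 5) * F2 n * (2 * G1 n + G1b n)
      + (1 / 5) * G1 n * G2 n + (1 / 5) * F1 n * (2 * G2 n + G2b n))
    (hGb0 : Gb 0 = (3 / 10) * (F2 n * H1 n + F1 n * H2 n)
      + (1 / 5) * ((G1b n + G1 n) * G2 n + G1 n * G2b n)
      + (1 / 5) * (F1 n * (G2 n + G2b n) + F2 n * (G1 n + G1b n)))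
    (hF : ∀ m, F (m + 1) = (2 / 3) * F m + (1 / 6) * (Ga m + Gb m))
    (hGa : ∀ m, Ga (m + 1) = (3 / 5) * F m + (3 / 10) * Ga m + (1 / 10) * Gb m)
    (hGb : ∀ m, Gb (m + 1) = (3 / 5) * F m + (1 / 10) * Ga m + (3 / 10) * Gb m) :
    ∀ m : ℕ,
      F m = 33 / 98 - (855 / 5488) * (3 / 5) ^ n - (45 / 1372) * (1 / 25) ^ n
        + (55 / 5488) * (1 / 375) ^ n + (11 / 147) * (1 / 15) ^ n
        - (1 / 147) * (1 / 225) ^ n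
        + (1 / 15) ^ m * ((57 / 5488) * (3 / 5) ^ n - (10 / 1029) * (1 / 25) ^ n
            + (185 / 16464) * (1 / 375) ^ n + (13 / 441) * (1 / 15) ^ n
            - (11 / 1323) * (1 / 225) ^ n) := by
  intro m
  have hF' : ∀ m, F (m + 1) = (1 - 1 / 3) * F m + 1 / 3 * ((Ga m + Gb m) / 2) := fun m => by
    rw [hF]; ring
  have hS : ∀ m, (Ga (m + 1) + Gb (m + 1)) / 2
      = 3 / 5 * F m + (1 - 3 / 5) * ((Ga m + Gb m) / 2) := fun m => by
    rw [hGa, hGb]; ring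
  rw [TwoStateRecurrence.eq_closed_form hF' hS (by norm_num), hF0, hGa0, hGb0]
  have h25 : (1 / 25 : ℚ) ^ n = (1 / 15) ^ n * (3 / 5) ^ n := by rw [← mul_pow]; norm_num
  have h225 : (1 / 225 : ℚ) ^ n = (1 / 15) ^ n * (1 / 15) ^ n := by rw [← mul_pow]; norm_num
  have h375 : (1 / 375 : ℚ) ^ n = (1 / 15) ^ n * (1 / 25) ^ n := by rw [← mul_pow]; norm_num
  simp only [F1, F2, G1, G2, G1b, G2b, H1, H2, h375, h225, h25]
  ring
end

section
/- Define F2(n)=3/14+(5/42)·(1/15)^n, G2(n)=3/14−(3/14)·(1/15)^n, G2b(n)=3/14+(2/7)·(1/15)^n−(9/28)·(3/5)^n−(5/28)·(1/25)^n, H2(n)=3/14−(3/14)·(1/15)^n−(3/14)·(3/5)^n+(3/14)·(1/25)^n. Fix n ≥ 0 and let F, Ga, Gb : ℕ → ℚ satisfy F(0)=(1/3)·(F2(n)·(G2(n)+G2b(n))+F2(n)²), Ga(0)=(3/10)·F2(n)²+(1/5)·F2(n)·(2·G2(n)+G2b(n))+(1/10)·G2(n)², Gb(0)=(3/10)·F2(n)·H2(n)+(1/5)·(F2(n)·(G2(n)+G2b(n))+G2(n)·G2b(n))+(1/10)·G2(n)²,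 together with the recursions F(m+1)=(2/3)F(m)+(1/6)(Ga(m)+Gb(m)), Ga(m+1)=(3/5)F(m)+(3/10)Ga(m)+(1/10)Gb(m), Gb(m+1)=(3/5)F(m)+(1/10)Ga(m)+(3/10)Gb(m). Then for all m ≥ 0: F(m) = 9/196 − (135/5488)·(3/5)^n − (27/1372)·(1/25)^n − (55/16464)·(1/375)^n + (11/392)·(1/15)^n + (1/294)·(1/225)^n + (1/15)^m·( (9/5488)·(3/5)^n − (2/343)·(1/25)^n − (185/49392)·(1/375)^n + (13/1176)·(1/15)^n + (11/2646)·(1/225)^n ). -/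
section PairRecurrence

variable {F S : ℕ → ℚ} (hF : ∀ m, F (m + 1) = 2 / 3 * F m + 1 / 6 * S m)
  (hS : ∀ m, S (m + 1) = 6 / 5 * F m + 2 / 5 * S m)
include hF hS

theorem invariant_of_pairRecurrence (m : ℕ) : 18 * F m + 5 * S m = 18 * F 0 + 5 * S 0 := by
  induction m with
  | zero => rfl
  | succ m ih => rw [hF, hS, ← ih]; ring

theorem decay_of_pairRecurrence (m : ℕ) :
    2 * F m - S m = (1 / 15) ^ m * (2 * F 0 - S 0) := by
  induction m with
  | zero => simp
  | succ m ih => rw [hF, hS, pow_succ]; linear_combination (1 / 15 : ℚ) * ih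

theorem eq_of_pairRecurrence (m : ℕ) :
    F m = (18 * F 0 + 5 * S 0) / 28 + (1 / 15) ^ m * (5 * (2 * F 0 - S 0) / 28) := by
  linear_combination (1 / 28 : ℚ) * invariant_of_pairRecurrence hF hS m
    + (5 / 28 : ℚ) * decay_of_pairRecurrence hF hS m

end PairRecurrence

/-- Closed form of `F_4(n+m+1,a_n)`: degree-4 probability at the interior vertex
`a_n` of the Sierpinski gasket `SG(n+m+1)`. -/
theorem stmt_14 (n : ℕ) (F Ga Gb : ℕ → ℚ)
    (hF0 : F 0 = (1 / 3) * (F2 n * (G2 n + G2b n) + (F2 n) ^ 2))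
    (hGa0 : Ga 0 = (3 / 10) * (F2 n) ^ 2 + (1 / 5) * F2 n * (2 * G2 n + G2b n)
      + (1 / 10) * (G2 n) ^ 2)
    (hGb0 : Gb 0 = (3 / 10) * F2 n * H2 n
      + (1 / 5) * (F2 n * (G2 n + G2b n) + G2 n * G2b n) + (1 / 10) * (G2 n) ^ 2)
    (hF : ∀ m, F (m + 1) = (2 / 3) * F m + (1 / 6) * (Ga m + Gb m))
    (hGa : ∀ m, Ga (m + 1) = (3 / 5) * F m + (3 / 10) * Ga m + (1 / 10) * Gb m)
    (hGb : ∀ m, Gb (m + 1) = (3 / 5) * F m + (1 / 10) * Ga m + (3 / 10) * Gb m) :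
    ∀ m : ℕ,
      F m = 9 / 196 - (135 / 5488) * (3 / 5) ^ n - (27 / 1372) * (1 / 25) ^ n
        - (55 / 16464) * (1 / 375) ^ n + (11 / 392) * (1 / 15) ^ n
        + (1 / 294) * (1 / 225) ^ n
        + (1 / 15) ^ m * ((9 / 5488) * (3 / 5) ^ n - (2 / 343) * (1 / 25) ^ n
            - (185 / 49392) * (1 / 375) ^ n + (13 / 1176) * (1 / 15) ^ n
            + (11 / 2646) * (1 / 225) ^ n) := by
  intro m
  have hS : ∀ m, Ga (m + 1) + Gb (m + 1) = 6 / 5 * F m + 2 / 5 * (Ga m + Gb m) := fun m => by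
    rw [hGa, hGb]; ring
  have h25 : (1 / 25 : ℚ) ^ n = (1 / 15) ^ n * (3 / 5) ^ n := by rw [← mul_pow]; norm_num
  have h225 : (1 / 225 : ℚ) ^ n = (1 / 15) ^ n * (1 / 15) ^ n := by rw [← mul_pow]; norm_num
  have h375 : (1 / 375 : ℚ) ^ n = (1 / 15) ^ n * (1 / 15) ^ n * (3 / 5) ^ n := by
    rw [← mul_pow, ← mul_pow]; norm_num
  rw [eq_of_pairRecurrence hF hS m, hF0, hGa0, hGb0]
  simp only [F2, G2, G2b, H2, h25, h225, h375]
  ring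
end

section
/- Define F1(n)=11/14−(5/42)·(1/15)^n, G1(n)=11/14+(3/14)·(1/15)^n, G0b(n)=(33/28)·(3/5)^n−(5/28)·(1/25)^n, H0(n)=(11/14)·(3/5)^n+(3/14)·(1/25)^n. Fix n ≥ 0 and let F, G : ℕ → ℚ satisfy F(0)=F1(n)·G0b(n)/3, G(0)=(3/10)·F1(n)·H0(n)+(1/5)·(F1(n)+G1(n))·G0b(n), together with the recursions F(m+1)=(2/3)·F(m)+(1/3)·G(m), G(m+1)=(3/5)·F(m)+(2/5)·G(m). Then for all m ≥ 0: F(m) = (1089/2744)·(3/5)^n − (22/343)·(1/25)^n + (5/8232)·(1/375)^n + (1/15)^m·( −(121/1372)·(3/5)^n − (121/4116)·(1/25)^n + (20/3087)·(1/375)^n ). -/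
/-!
The transition matrix `!![2/3, 1/3; 3/5, 2/5]` has eigenvalues `1` and `1/15`: the combination
`9 F + 5 G` is invariant and `F - G` is multiplied by `1/15` at each step, so
`F m = (9 F 0 + 5 G 0) / 14 + (1/15)^m (5 / 14) (F 0 - G 0)`. The initial values are polynomials
in `(1/15)^n` and `(3/5)^n`, because `1/25 = (1/15)(3/5)` and `1/375 = (1/15)^2 (3/5)`, and
substituting them gives the closed form.
-/

section Recursion

variable {K : Type*} [Field K] [CharZero K] {F G : ℕ → K}

theorem sub_eq_pow_mul_sub_of_rec (hF : ∀ m, F (m + 1) = (2 / 3) * F m + (1 / 3) * G m)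
    (hG : ∀ m, G (m + 1) = (3 / 5) * F m + (2 / 5) * G m) (m : ℕ) :
    F m - G m = (1 / 15) ^ m * (F 0 - G 0) := by
  induction m with
  | zero => simp
  | succ k ih =>
    rw [hF k, hG k, pow_succ]
    linear_combination (1 / 15 : K) * ih

theorem nine_mul_add_five_mul_eq_of_rec (hF : ∀ m, F (m + 1) = (2 / 3) * F m + (1 / 3) * G m)
    (hG : ∀ m, G (m + 1) = (3 / 5) * F m + (2 / 5) * G m) (m : ℕ) :
    9 * F m + 5 * G m = 9 * F 0 + 5 * G 0 := by
  induction m with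
  | zero => rfl
  | succ k ih =>
    rw [hF k, hG k]
    linear_combination ih

theorem eq_add_pow_mul_of_rec (hF : ∀ m, F (m + 1) = (2 / 3) * F m + (1 / 3) * G m)
    (hG : ∀ m, G (m + 1) = (3 / 5) * F m + (2 / 5) * G m) (m : ℕ) :
    F m = (9 * F 0 + 5 * G 0) / 14 + (1 / 15) ^ m * (5 / 14 * (F 0 - G 0)) := by
  linear_combination (1 / 14 : K) * nine_mul_add_five_mul_eq_of_rec hF hG m
    + (5 / 14 : K) * sub_eq_pow_mul_sub_of_rec hF hG m

end Recursion

/-- Closed form of `F_1(n+m+1,c_n)`: degree-1 probability at the interior vertex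
`c_n` of the Sierpinski gasket `SG(n+m+1)`. -/
theorem stmt_15 (n : ℕ) (F G : ℕ → ℚ)
    (hF0 : F 0 = F1 n * G0b n / 3)
    (hG0 : G 0 = (3 / 10) * F1 n * H0 n + (1 / 5) * (F1 n + G1 n) * G0b n)
    (hF : ∀ m, F (m + 1) = (2 / 3) * F m + (1 / 3) * G m)
    (hG : ∀ m, G (m + 1) = (3 / 5) * F m + (2 / 5) * G m) :
    ∀ m : ℕ,
      F m = (1089 / 2744) * (3 / 5) ^ n - (22 / 343) * (1 / 25) ^ n
        + (5 / 8232) * (1 / 375) ^ n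
        + (1 / 15) ^ m * (-(121 / 1372) * (3 / 5) ^ n - (121 / 4116) * (1 / 25) ^ n
            + (20 / 3087) * (1 / 375) ^ n) := by
  have h25 : ((1 : ℚ) / 25) ^ n = (1 / 15) ^ n * (3 / 5) ^ n := by
    rw [← mul_pow]; norm_num
  have h375 : ((1 : ℚ) / 375) ^ n = (1 / 15) ^ n * (1 / 15) ^ n * (3 / 5) ^ n := by
    rw [← mul_pow, ← mul_pow]; norm_num
  intro m
  rw [eq_add_pow_mul_of_rec hF hG m, hF0, hG0]
  simp only [F1, G1, G0b, H0, h25, h375]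
  ring
end

section
/- Define F1(n)=11/14−(5/42)·(1/15)^n, F2(n)=3/14+(5/42)·(1/15)^n, G1(n)=11/14+(3/14)·(1/15)^n, G2(n)=3/14−(3/14)·(1/15)^n, G0b(n)=(33/28)·(3/5)^n−(5/28)·(1/25)^n, H0(n)=(11/14)·(3/5)^n+(3/14)·(1/25)^n, G1b(n)=11/14−(2/7)·(1/15)^n−(6/7)·(3/5)^n+(5/14)·(1/25)^n, H1(n)=11/14+(3/14)·(1/15)^n−(4/7)·(3/5)^n−(3/7)·(1/25)^n. Fix n ≥ 0 and let F, G : ℕ → ℚ satisfy F(0)=(1/3)·(F2(n)·G0b(n)+F1(n)²+F1(n)·(G1(n)+G1b(n))), G(0)=(3/10)·(F2(n)·H0(n)+F1(n)·H1(n))+(1/10)·G1(n)²+(1/5)·F1(n)·(G1(n)+G1b(n))+(1/5)·F2(n)·G0b(n)+(1/5)·(G0b(n)·G2(n)+G1(n)·G1b(n)), together with the recursions F(m+1)=(2/3)·F(m)+(1/3)·G(m), G(m+1)=(3/5)·F(m)+(2/5)·G(m). Then for all m ≥ 0: F(m) = 121/196 − (495/2744)·(3/5)^n + (38/343)·(1/25)^n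 − (5/2744)·(1/375)^n − (55/588)·(1/15)^n + (1/15)^m·( (55/1372)·(3/5)^n + (209/4116)·(1/25)^n − (20/1029)·(1/375)^n − (22/441)·(1/15)^n + (10/1323)·(1/225)^n ). -/
/-! The recursion is a two-state chain whose transfer matrix `!![2/3, 1/3; 3/5, 2/5]` has
eigenvalues `1` and `1/15`, so `F m = (9 F(0) + 5 G(0)) / 14 + 15⁻ᵐ · 5 (F(0) - G(0)) / 14`.
The initial values are polynomials in `15⁻ⁿ` and `(3/5)ⁿ`, since `25⁻ⁿ = 15⁻ⁿ (3/5)ⁿ`,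
`375⁻ⁿ = 15⁻²ⁿ (3/5)ⁿ` and `225⁻ⁿ = 15⁻²ⁿ`, and the two coefficients evaluate to those of the
closed form. -/

section TwoStateRecurrence

variable {K : Type*} [Field K] {p q : K} {F G : ℕ → K}

theorem two_state_recurrence_eq (hpq : p + q ≠ 0)
    (hF : ∀ m, F (m + 1) = (1 - p) * F m + p * G m)
    (hG : ∀ m, G (m + 1) = q * F m + (1 - q) * G m) (m : ℕ) :
    F m = (q * F 0 + p * G 0) / (p + q) + (1 - p - q) ^ m * (p * (F 0 - G 0) / (p + q)) ∧
      G m = (q * F 0 + p * G 0) / (p + q) - (1 - p - q) ^ m * (q * (F 0 - G 0) / (p + q)) := by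
  induction m with
  | zero => constructor <;> field_simp <;> ring
  | succ k ih =>
    obtain ⟨ihF, ihG⟩ := ih
    constructor
    · rw [hF k, ihF, ihG, pow_succ]; field_simp; ring
    · rw [hG k, ihF, ihG, pow_succ]; field_simp; ring

end TwoStateRecurrence

theorem eq_closed_form_of_recurrence {F G : ℕ → ℚ}
    (hF : ∀ m, F (m + 1) = (2 / 3) * F m + (1 / 3) * G m)
    (hG : ∀ m, G (m + 1) = (3 / 5) * F m + (2 / 5) * G m) (m : ℕ) :
    F m = (9 * F 0 + 5 * G 0) / 14 + (1 / 15) ^ m * (5 * (F 0 - G 0) / 14) := by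
  have h := (two_state_recurrence_eq (p := (1 / 3 : ℚ)) (q := 3 / 5) (F := F) (G := G)
    (by norm_num) (fun m => by rw [hF]; norm_num) (fun m => by rw [hG]; norm_num) m).1
  rw [h]
  ring

/-- `F_2(n+1,c_n)`. -/
def F2c (n : ℕ) : ℚ := (1 / 3) * (F2 n * G0b n + (F1 n) ^ 2 + F1 n * (G1 n + G1b n))

/-- `G_2(n+1,c_n)`. -/
def G2c (n : ℕ) : ℚ :=
  (3 / 10) * (F2 n * H0 n + F1 n * H1 n) + (1 / 10) * (G1 n) ^ 2
    + (1 / 5) * F1 n * (G1 n + G1b n) + (1 / 5) * F2 n * G0b n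
    + (1 / 5) * (G0b n * G2 n + G1 n * G1b n)

theorem weighted_mean_F2c_G2c (n : ℕ) :
    (9 * F2c n + 5 * G2c n) / 14 = 121 / 196 - (495 / 2744) * (3 / 5) ^ n
      + (38 / 343) * (1 / 25) ^ n - (5 / 2744) * (1 / 375) ^ n - (55 / 588) * (1 / 15) ^ n := by
  simp only [F2c, G2c, F1, F2, G1, G2, G0b, H0, G1b, H1,
    show (1 : ℚ) / 25 = 1 / 15 * (3 / 5) by norm_num,
    show (1 : ℚ) / 375 = 1 / 15 * (1 / 15) * (3 / 5) by norm_num, mul_pow]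
  ring

theorem scaled_F2c_sub_G2c (n : ℕ) :
    5 * (F2c n - G2c n) / 14 = (55 / 1372) * (3 / 5) ^ n + (209 / 4116) * (1 / 25) ^ n
      - (20 / 1029) * (1 / 375) ^ n - (22 / 441) * (1 / 15) ^ n + (10 / 1323) * (1 / 225) ^ n := by
  simp only [F2c, G2c, F1, F2, G1, G2, G0b, H0, G1b, H1,
    show (1 : ℚ) / 25 = 1 / 15 * (3 / 5) by norm_num,
    show (1 : ℚ) / 375 = 1 / 15 * (1 / 15) * (3 / 5) by norm_num,
    show (1 : ℚ) / 225 = 1 / 15 * (1 / 15) by norm_num, mul_pow]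
  ring

/-- Closed form of `F_2(n+m+1,c_n)`: degree-2 probability at the interior vertex
`c_n` of the Sierpinski gasket `SG(n+m+1)`. -/
theorem stmt_16 (n : ℕ) (F G : ℕ → ℚ)
    (hF0 : F 0 = (1 / 3) * (F2 n * G0b n + (F1 n) ^ 2 + F1 n * (G1 n + G1b n)))
    (hG0 : G 0 = (3 / 10) * (F2 n * H0 n + F1 n * H1 n) + (1 / 10) * (G1 n) ^ 2
      + (1 / 5) * F1 n * (G1 n + G1b n) + (1 / 5) * F2 n * G0b n
      + (1 / 5) * (G0b n * G2 n + G1 n * G1b n))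
    (hF : ∀ m, F (m + 1) = (2 / 3) * F m + (1 / 3) * G m)
    (hG : ∀ m, G (m + 1) = (3 / 5) * F m + (2 / 5) * G m) :
    ∀ m : ℕ,
      F m = 121 / 196 - (495 / 2744) * (3 / 5) ^ n + (38 / 343) * (1 / 25) ^ n
        - (5 / 2744) * (1 / 375) ^ n - (55 / 588) * (1 / 15) ^ n
        + (1 / 15) ^ m * ((55 / 1372) * (3 / 5) ^ n + (209 / 4116) * (1 / 25) ^ n
            - (20 / 1029) * (1 / 375) ^ n - (22 / 441) * (1 / 15) ^ n
            + (10 / 1323) * (1 / 225) ^ n) := by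
  intro m
  rw [eq_closed_form_of_recurrence hF hG m, show F 0 = F2c n from hF0, show G 0 = G2c n from hG0,
    weighted_mean_F2c_G2c, scaled_F2c_sub_G2c]
end

section
/- Let R and E be the 5×5 rational matrices R = [[2/3,3/5,1/10,3/5,6/25],[1/6,3/10,1/10,1/10,7/50],[0,0,2/5,0,6/25],[1/6,1/10,1/10,3/10,7/50],[0,0,3/10,0,6/25]] and E = [[3,0,0,0,0],[0,2,1,0,0],[0,1,1,1,0],[0,0,1,2,0],[0,0,0,0,3]]. Let B : ℕ → Matrix (Fin 3) (Fin 5) ℚ be an arbitrary sequence of 3×5 rational matrices, and define M : ℕ → Matrix (Fin 3) (Fin 5) ℚ by M(3) = B(1)·R·E·R and M(n+1) = (B(n−1)·R + M(n))·E·R for all n ≥ 3. Then for every n ≥ 2, M(n+1) = Σ_{m=1}^{n−1} B(m)·R·(E·R)^{n−m}. Moreover, with L the 5×5 rational matrix [[2/3,3/5,3/5,3/5,6/25],[1/6,3/10,1/10,0,7/50],[1/6,1/10,3/10,1/10,7/50],[0,0,0,3/10,6/25],[0,0,0,0,6/25]], for every n ≥ 3 one has Σ_{m=3}^{n} M(m)·L^{n−m}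 = Σ_{s=1}^{n−2} B(s)·( Σ_{m=1}^{n−s−1} R·(E·R)^m·L^{n−1−m−s} ). -/
/-!
Unrolling the recurrence `M (n + 1) = (B (n - 1) * R + M n) * T` with `T = E * R` gives the
closed form of the first identity. Substituting it into `∑ m, M m * L ^ (n - m)` yields a double
sum over the triangle `1 ≤ s`, `s + 2 ≤ m ≤ n`; exchanging the order of summation and
reindexing the inner sum by `j = m - 1 - s` gives the second identity.
-/

open Finset

namespace Matrix

variable {l n α : Type*} [Fintype n] [DecidableEq n] [Semiring α]

theorem eq_sum_mul_pow_of_recurrence {B M : ℕ → Matrix l n α} {R T : Matrix n n α}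
    (hM3 : M 3 = B 1 * R * T)
    (hMrec : ∀ n, 3 ≤ n → M (n + 1) = (B (n - 1) * R + M n) * T) :
    ∀ n, 2 ≤ n → M (n + 1) = ∑ m ∈ Icc 1 (n - 1), B m * R * T ^ (n - m) := by
  intro n hn
  induction n, hn using Nat.le_induction with
  | base => simp [hM3]
  | succ n hn ih =>
    obtain ⟨k, rfl⟩ : ∃ k, n = k + 1 := ⟨n - 1, by omega⟩
    simp only [Nat.add_sub_cancel] at ih ⊢
    rw [hMrec (k + 1 + 1) (by omega), ih, sum_Icc_succ_top (by omega), Matrix.add_mul,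
      Matrix.sum_mul, add_comm]
    simp only [Nat.add_sub_cancel_left, pow_one]
    refine congrArg₂ _ (sum_congr rfl fun m hm => ?_) rfl
    rw [mem_Icc] at hm
    rw [Matrix.mul_assoc, ← pow_succ]
    congr 2
    omega

theorem sum_Icc_mul_pow_eq {B M : ℕ → Matrix l n α} {R T L : Matrix n n α}
    (hM : ∀ n, 2 ≤ n → M (n + 1) = ∑ m ∈ Icc 1 (n - 1), B m * R * T ^ (n - m)) (n : ℕ) :
    ∑ m ∈ Icc 3 n, M m * L ^ (n - m) =
      ∑ s ∈ Icc 1 (n - 2), B s * ∑ j ∈ Icc 1 (n - s - 1), R * T ^ j * L ^ (n - 1 - j - s) :=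
  calc ∑ m ∈ Icc 3 n, M m * L ^ (n - m)
      = ∑ m ∈ Icc 3 n, ∑ s ∈ Icc 1 (m - 2), B s * (R * T ^ (m - 1 - s) * L ^ (n - m)) := by
        refine sum_congr rfl fun m hm => ?_
        rw [mem_Icc] at hm
        obtain ⟨k, rfl⟩ : ∃ k, m = k + 1 := ⟨m - 1, by omega⟩
        rw [hM k (by omega), Matrix.sum_mul]
        refine sum_congr rfl fun s _ => ?_
        simp only [Matrix.mul_assoc, Nat.add_sub_cancel]
    _ = ∑ s ∈ Icc 1 (n - 2), ∑ m ∈ Icc (s + 2) n, B s * (R * T ^ (m - 1 - s) * L ^ (n - m)) :=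
        sum_comm' fun m s => by simp only [mem_Icc]; omega
    _ = ∑ s ∈ Icc 1 (n - 2), B s * ∑ j ∈ Icc 1 (n - s - 1), R * T ^ j * L ^ (n - 1 - j - s) := by
        refine sum_congr rfl fun s _ => ?_
        rw [Matrix.mul_sum]
        refine sum_nbij' (fun m => m - 1 - s) (fun j => j + 1 + s) ?_ ?_ ?_ ?_ fun m hm => ?_
        any_goals intro m hm; simp only [mem_Icc] at *; omega
        rw [mem_Icc] at hm
        rw [show n - 1 - (m - 1 - s) - s = n - m by omega]

end Matrix

open Finset in
theorem stmt_18_general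
    (R E L : Matrix (Fin 5) (Fin 5) ℚ)
    (B M : ℕ → Matrix (Fin 3) (Fin 5) ℚ)
    (hM3 : M 3 = B 1 * R * E * R)
    (hMrec : ∀ n, 3 ≤ n → M (n + 1) = (B (n - 1) * R + M n) * E * R) :
    (∀ n, 2 ≤ n →
      M (n + 1) = ∑ m ∈ Finset.Icc 1 (n - 1), B m * R * (E * R) ^ (n - m)) ∧
    (∀ n, 3 ≤ n →
      ∑ m ∈ Finset.Icc 3 n, M m * L ^ (n - m) =
        ∑ s ∈ Finset.Icc 1 (n - 2), B s *
          (∑ m ∈ Finset.Icc 1 (n - s - 1), R * (E * R) ^ m * L ^ (n - 1 - m - s))) := by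
  have hM : ∀ n, 2 ≤ n → M (n + 1) = ∑ m ∈ Icc 1 (n - 1), B m * R * (E * R) ^ (n - m) :=
    Matrix.eq_sum_mul_pow_of_recurrence (by rw [hM3, Matrix.mul_assoc _ E R])
      fun n hn => by rw [hMrec n hn, Matrix.mul_assoc _ E R]
  exact ⟨hM, fun n _ => Matrix.sum_Icc_mul_pow_eq hM n⟩

open Finset in
/-- Matrix identity for the sums `M_j(n)` of degree-probability matrices over all
vertex labels of length at least 3 in the Sierpinski gasket, in terms of the
transfer matrices `R`, `E` and `L`. -/
theorem stmt_18
    (R E L : Matrix (Fin 5) (Fin 5) ℚ)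
    (hR : R = !![2/3, 3/5, 1/10, 3/5, 6/25;
                 1/6, 3/10, 1/10, 1/10, 7/50;
                 0, 0, 2/5, 0, 6/25;
                 1/6, 1/10, 1/10, 3/10, 7/50;
                 0, 0, 3/10, 0, 6/25])
    (hE : E = !![3, 0, 0, 0, 0;
                 0, 2, 1, 0, 0;
                 0, 1, 1, 1, 0;
                 0, 0, 1, 2, 0;
                 0, 0, 0, 0, 3])
    (hL : L = !![2/3, 3/5, 3/5, 3/5, 6/25;
                 1/6, 3/10, 1/10, 0, 7/50;
                 1/6, 1/10, 3/10, 1/10, 7/50;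
                 0, 0, 0, 3/10, 6/25;
                 0, 0, 0, 0, 6/25])
    (B M : ℕ → Matrix (Fin 3) (Fin 5) ℚ)
    (hM3 : M 3 = B 1 * R * E * R)
    (hMrec : ∀ n, 3 ≤ n → M (n + 1) = (B (n - 1) * R + M n) * E * R) :
    (∀ n, 2 ≤ n →
      M (n + 1) = ∑ m ∈ Finset.Icc 1 (n - 1), B m * R * (E * R) ^ (n - m)) ∧
    (∀ n, 3 ≤ n →
      ∑ m ∈ Finset.Icc 3 n, M m * L ^ (n - m) =
        ∑ s ∈ Finset.Icc 1 (n - 2), B s *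
          (∑ m ∈ Finset.Icc 1 (n - s - 1), R * (E * R) ^ m * L ^ (n - 1 - m - s))) :=
  stmt_18_general R E L B M hM3 hMrec
end

section
/- Let R, E, L be the 5×5 rational matrices R = [[2/3,3/5,1/10,3/5,6/25],[1/6,3/10,1/10,1/10,7/50],[0,0,2/5,0,6/25],[1/6,1/10,1/10,3/10,7/50],[0,0,3/10,0,6/25]], E = [[3,0,0,0,0],[0,2,1,0,0],[0,1,1,1,0],[0,0,1,2,0],[0,0,0,0,3]], L = [[2/3,3/5,3/5,3/5,6/25],[1/6,3/10,1/10,0,7/50],[1/6,1/10,3/10,1/10,7/50],[0,0,0,3/10,6/25],[0,0,0,0,6/25]], and let Q1 = [[159,−87,0,−3,−3],[38,14,1,2,1],[38,14,0,2,−4],[38,14,−1,2,1],[15,45,0,−3,5]], Q2 = [[18,0,−27,0,−2],[5,−1,98,−1,1],[5,0,−32,1,1],[0,1,−52,0,0],[0,0,13,0,0]], D1 = diag(0,1,2/5,3/25,0), D̄1 the matrix whose (1,1) entry is 3 and all other entries 0, and D2 = diag(1,3/10,6/25,1/5,1/15). Then Q1 and Q2 are invertible, E·R = Q1·(D1+D̄1)·Q1⁻¹,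 and L = Q2·D2·Q2⁻¹. -/
/-!
Both identities say that the columns of `Q` are eigenvectors, i.e. `A * Q = Q * D`; this and the
invertibility of `Q` are finite computations in exact rational arithmetic, the latter certified by
an explicit inverse.
-/

namespace Matrix

variable {n R : Type*} [Fintype n] [DecidableEq n] [CommRing R]

theorem isUnit_of_mul_eq_one {Q P : Matrix n n R} (h : Q * P = 1) : IsUnit Q :=
  (isUnit_iff_isUnit_det Q).mpr (isUnit_det_of_right_inverse h)

theorem eq_mul_mul_inv_of_mul_eq_mul {A Q D P : Matrix n n R} (hQP : Q * P = 1)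
    (h : A * Q = Q * D) : A = Q * D * Q⁻¹ := by
  rw [inv_eq_right_inv hQP, ← h, Matrix.mul_assoc, hQP, Matrix.mul_one]

end Matrix

/-- Explicit diagonalizations `E·R = Q₁(D₁+D̄₁)Q₁⁻¹` (eigenvalues 3, 1, 2/5, 3/25, 0)
and `L = Q₂D₂Q₂⁻¹` (eigenvalues 1, 3/10, 6/25, 1/5, 1/15) of the transfer matrices
appearing in the average spanning-tree degree distribution on the Sierpinski gasket. -/
theorem stmt_19
    (R E L Q1 Q2 D1 D1bar D2 : Matrix (Fin 5) (Fin 5) ℚ)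
    (hR : R = !![2/3, 3/5, 1/10, 3/5, 6/25;
                 1/6, 3/10, 1/10, 1/10, 7/50;
                 0, 0, 2/5, 0, 6/25;
                 1/6, 1/10, 1/10, 3/10, 7/50;
                 0, 0, 3/10, 0, 6/25])
    (hE : E = !![3, 0, 0, 0, 0;
                 0, 2, 1, 0, 0;
                 0, 1, 1, 1, 0;
                 0, 0, 1, 2, 0;
                 0, 0, 0, 0, 3])
    (hL : L = !![2/3, 3/5, 3/5, 3/5, 6/25;
                 1/6, 3/10, 1/10, 0, 7/50;
                 1/6, 1/10, 3/10, 1/10, 7/50;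
                 0, 0, 0, 3/10, 6/25;
                 0, 0, 0, 0, 6/25])
    (hQ1 : Q1 = !![159, -87, 0, -3, -3;
                   38, 14, 1, 2, 1;
                   38, 14, 0, 2, -4;
                   38, 14, -1, 2, 1;
                   15, 45, 0, -3, 5])
    (hQ2 : Q2 = !![18, 0, -27, 0, -2;
                   5, -1, 98, -1, 1;
                   5, 0, -32, 1, 1;
                   0, 1, -52, 0, 0;
                   0, 0, 13, 0, 0])
    (hD1 : D1 = Matrix.diagonal ![0, 1, 2/5, 3/25, 0])
    (hD1bar : D1bar = !![3, 0, 0, 0, 0;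
                         0, 0, 0, 0, 0;
                         0, 0, 0, 0, 0;
                         0, 0, 0, 0, 0;
                         0, 0, 0, 0, 0])
    (hD2 : D2 = Matrix.diagonal ![1, 3/10, 6/25, 1/5, 1/15]) :
    IsUnit Q1 ∧ IsUnit Q2 ∧
    E * R = Q1 * (D1 + D1bar) * Q1⁻¹ ∧
    L = Q2 * D2 * Q2⁻¹ := by
  subst hR hE hL hQ1 hQ2 hD1 hD1bar hD2
  have hQ1P1 : !![(159 : ℚ), -87, 0, -3, -3;
                   38, 14, 1, 2, 1;
                   38, 14, 0, 2, -4;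
                   38, 14, -1, 2, 1;
                   15, 45, 0, -3, 5] *
      !![1/288, 1/288, 1/288, 1/288, 1/288;
         -1/264, -1/440, 7/440, -1/440, 1/88;
         0, 1/2, 0, -1/2, 0;
         -125/3168, 475/3168, -245/3168, 475/3168, -461/3168;
         0, 1/10, -1/5, 1/10, 0] = 1 := by
    ext i j
    fin_cases i <;> fin_cases j <;> simp [Matrix.mul_apply, Fin.sum_univ_five] <;> norm_num
  have hQ2P2 : !![(18 : ℚ), 0, -27, 0, -2;
                   5, -1, 98, -1, 1;
                   5, 0, -32, 1, 1;
                   0, 1, -52, 0, 0;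
                   0, 0, 13, 0, 0] *
      !![1/28, 1/28, 1/28, 1/28, 1/28;
         0, 0, 0, 1, 4;
         0, 0, 0, 0, 1/13;
         0, -1/2, 1/2, -1/2, 3;
         -5/28, 9/28, 9/28, 9/28, -261/364] = 1 := by
    ext i j
    fin_cases i <;> fin_cases j <;> simp [Matrix.mul_apply, Fin.sum_univ_five] <;> norm_num
  refine ⟨Matrix.isUnit_of_mul_eq_one hQ1P1, Matrix.isUnit_of_mul_eq_one hQ2P2,
    Matrix.eq_mul_mul_inv_of_mul_eq_mul hQ1P1 ?_, Matrix.eq_mul_mul_inv_of_mul_eq_mul hQ2P2 ?_⟩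
  all_goals
    ext i j
    fin_cases i <;> fin_cases j <;> simp [Matrix.mul_apply, Fin.sum_univ_five] <;> norm_num
end
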